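/- Normalized-direction update for damped preconditioned descent: for θ ∈ ℝ^n \ {0} with ρ = ‖θ‖, θ̂ = θ/ρ, a curvature map satisfying C(θ) = ρ⁻² C(θ̂), damping λ > 0, and gradient satisfying ∇L(θ) = ρ⁻¹ ∇L(θ̂) (scale invariance), the update θ⁺ = θ − η(C(θ) + λI)⁻¹∇L(θ) yields θ⁺/‖θ⁺‖ = θ̂ − η (I − θ̂θ̂ᵀ)(C(θ̂) + ρ²λ I)⁻¹ ∇L(θ̂) + O(η²). -/

import Mathlib

/-!
Since `ρ⁻²C(θ̂) + λI = ρ⁻²(C(θ̂) + ρ²λI)` and `∇L(θ) = ρ⁻¹∇L(θ̂)`, the step is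
`θ⁺ = θ − η ρ w` with `w = (C(θ̂) + ρ²λI)⁻¹∇L(θ̂)`. The normalization map `y ↦ y/‖y‖` is analytic
away from `0` with derivative `v ↦ ‖y‖⁻¹(v − ⟪ŷ, v⟫ŷ)` at `y`, so along the line `η ↦ θ − η ρ w`
it equals `θ̂ − η (w − ⟪θ̂, w⟫θ̂)` up to the second-order Taylor remainder.
-/

open scoped RealInnerProductSpace ContDiff
open Asymptotics Topology

/-- If `A` is singular then so is `k • A`, and both inverses are the junk value `0`. -/
theorem Matrix.inv_smul_of_ne_zero {ι K : Type*} [Fintype ι] [DecidableEq ι] [Field K]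
    {k : K} (hk : k ≠ 0) (A : Matrix ι ι K) : (k • A)⁻¹ = k⁻¹ • A⁻¹ := by
  by_cases hA : IsUnit A.det
  · exact A.inv_smul' (Units.mk0 k hk) hA
  · have hkA : ¬IsUnit (k • A).det := by
      rwa [Matrix.det_smul, IsUnit.mul_iff, not_and_or, or_iff_right]
      exact not_not.mpr ((Ne.isUnit hk).pow _)
    rw [Matrix.nonsing_inv_apply_not_isUnit _ hA, Matrix.nonsing_inv_apply_not_isUnit _ hkA,
      smul_zero]

theorem Matrix.inv_inv_sq_smul_add_smul_one_mulVec_inv_smul {ι : Type*} [Fintype ι]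
    [DecidableEq ι] (C : Matrix ι ι ℝ) (lam : ℝ) {ρ : ℝ} (hρ : ρ ≠ 0) (g : ι → ℝ) :
    ((ρ ^ 2)⁻¹ • C + lam • (1 : Matrix ι ι ℝ))⁻¹.mulVec (ρ⁻¹ • g)
      = ρ • (C + (ρ ^ 2 * lam) • (1 : Matrix ι ι ℝ))⁻¹.mulVec g := by
  have hscale : (ρ ^ 2)⁻¹ • C + lam • (1 : Matrix ι ι ℝ)
      = (ρ ^ 2)⁻¹ • (C + (ρ ^ 2 * lam) • (1 : Matrix ι ι ℝ)) := by
    rw [smul_add, smul_smul, inv_mul_cancel_left₀ (pow_ne_zero 2 hρ)]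
  rw [hscale, Matrix.inv_smul_of_ne_zero (inv_ne_zero (pow_ne_zero 2 hρ)), inv_inv,
    Matrix.smul_mulVec, Matrix.mulVec_smul, smul_smul]
  congr 1
  field_simp

theorem AnalyticAt.isBigO_sub_sub_smul {F : Type*} [NormedAddCommGroup F] [NormedSpace ℝ F]
    {f : ℝ → F} {x₀ : ℝ} {d : F} (hf : AnalyticAt ℝ f x₀) (hd : HasDerivAt f d x₀) :
    (fun h : ℝ => f (x₀ + h) - f x₀ - h • d) =O[𝓝 0] fun h : ℝ => h ^ 2 := by
  obtain ⟨p, hp⟩ := hf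
  have hd1 : d = p 1 fun _ => 1 := hd.unique hp.hasDerivAt
  refine (hp.isBigO_sub_partialSum_pow 2).congr (fun h => ?_) (fun h => by simp)
  have hlin : (p 1 fun _ => h) = h • p 1 fun _ => 1 := by
    simp [p.apply_eq_pow_smul_coeff (n := 1) (z := h)]
  simp only [FormalMultilinearSeries.partialSum, Finset.sum_range_succ, Finset.sum_range_zero,
    zero_add, hp.coeff_zero, hlin, hd1, sub_sub]

section Normalize

variable {E : Type*} [NormedAddCommGroup E] [InnerProductSpace ℝ E]

theorem analyticAt_normalize_sub_smul {x : E} (hx : x ≠ 0) (v : E) :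
    AnalyticAt ℝ (fun η : ℝ => ‖x - η • v‖⁻¹ • (x - η • v)) 0 := by
  have hline : ContDiffAt ℝ ω (fun η : ℝ => x - η • v) 0 := by fun_prop
  have hx0 : x - (0 : ℝ) • v ≠ 0 := by simpa using hx
  exact ((hline.norm ℝ hx0).inv (norm_ne_zero_iff.mpr hx0)).smul hline |>.analyticAt

theorem hasDerivAt_normalize_sub_smul {x : E} (hx : x ≠ 0) (v : E) :
    HasDerivAt (fun η : ℝ => ‖x - η • v‖⁻¹ • (x - η • v))
      (-(‖x‖⁻¹ • (v - ⟪‖x‖⁻¹ • x, v⟫ • (‖x‖⁻¹ • x)))) 0 := by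
  have hline : HasDerivAt (fun η : ℝ => x - η • v) (-v) 0 := by
    simpa using ((hasDerivAt_id (0 : ℝ)).smul_const v).const_sub x
  have hnorm : HasDerivAt (fun η : ℝ => ‖x - η • v‖) (-(‖x‖⁻¹ * ⟪x, v⟫)) 0 := by
    have := hline.norm_sq.sqrt (by simpa using hx)
    simp only [Real.sqrt_sq (norm_nonneg _)] at this
    convert this using 1
    simp only [zero_smul, sub_zero, inner_neg_right]
    field_simp
  refine ((hnorm.inv (by simpa using hx)).smul hline).congr_deriv ?_
  simp only [zero_smul, sub_zero, Pi.inv_apply, real_inner_smul_left, smul_sub, smul_smul]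
  rw [neg_sub, sub_eq_neg_add, smul_neg]
  congr 2
  field_simp

theorem isBigO_normalize_sub_smul {x : E} (hx : x ≠ 0) (v : E) :
    (fun η : ℝ => ‖x - η • v‖⁻¹ • (x - η • v) -
        (‖x‖⁻¹ • x - η • (‖x‖⁻¹ • (v - ⟪‖x‖⁻¹ • x, v⟫ • (‖x‖⁻¹ • x)))))
      =O[𝓝 0] fun η : ℝ => η ^ 2 := by
  convert (analyticAt_normalize_sub_smul hx v).isBigO_sub_sub_smul
    (hasDerivAt_normalize_sub_smul hx v) using 2 with η
  simp only [zero_add, zero_smul, sub_zero, smul_neg, sub_neg_eq_add]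
  abel

end Normalize

theorem damped_preconditioned_normalized_update_general {n : ℕ}
    (θ : EuclideanSpace ℝ (Fin n)) (hθ : θ ≠ 0)
    (Ch : Matrix (Fin n) (Fin n) ℝ)
    (lam : ℝ) (ghat : Fin n → ℝ) :
    (fun η : ℝ =>
        (fun θplus : EuclideanSpace ℝ (Fin n) => ‖θplus‖⁻¹ • θplus)
          (θ - η • (EuclideanSpace.equiv (Fin n) ℝ).symm
            (((‖θ‖ ^ 2)⁻¹ • Ch + lam • (1 : Matrix (Fin n) (Fin n) ℝ))⁻¹.mulVec
              (‖θ‖⁻¹ • ghat))) -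
        (‖θ‖⁻¹ • θ - η •
          ((fun v : EuclideanSpace ℝ (Fin n) => v - ⟪‖θ‖⁻¹ • θ, v⟫ • (‖θ‖⁻¹ • θ))
            ((EuclideanSpace.equiv (Fin n) ℝ).symm
              ((Ch + (‖θ‖ ^ 2 * lam) • (1 : Matrix (Fin n) (Fin n) ℝ))⁻¹.mulVec ghat)))))
      =O[nhds 0] fun η : ℝ => η ^ 2 := by
  have hρ : ‖θ‖ ≠ 0 := norm_ne_zero_iff.mpr hθ
  set w := (EuclideanSpace.equiv (Fin n) ℝ).symm
    ((Ch + (‖θ‖ ^ 2 * lam) • (1 : Matrix (Fin n) (Fin n) ℝ))⁻¹.mulVec ghat)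
  have hstep : (EuclideanSpace.equiv (Fin n) ℝ).symm
      (((‖θ‖ ^ 2)⁻¹ • Ch + lam • (1 : Matrix (Fin n) (Fin n) ℝ))⁻¹.mulVec (‖θ‖⁻¹ • ghat))
        = ‖θ‖ • w := by
    rw [Matrix.inv_inv_sq_smul_add_smul_one_mulVec_inv_smul Ch lam hρ ghat, map_smul]
  have htangent : ‖θ‖⁻¹ • (‖θ‖ • w - ⟪‖θ‖⁻¹ • θ, ‖θ‖ • w⟫ • (‖θ‖⁻¹ • θ))
      = w - ⟪‖θ‖⁻¹ • θ, w⟫ • (‖θ‖⁻¹ • θ) := by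
    rw [real_inner_smul_right, ← smul_smul, ← smul_sub, smul_smul, inv_mul_cancel₀ hρ, one_smul]
  simpa only [hstep, htangent] using isBigO_normalize_sub_smul hθ (‖θ‖ • w)

/-- Normalized-direction update for damped preconditioned descent. With `ρ = ‖θ‖`,
`θ̂ = θ/ρ`, curvature `C(θ) = ρ⁻² C(θ̂)` and scale-invariant gradient
`∇L(θ) = ρ⁻¹ ∇L(θ̂)`, the damped update `θ⁺ = θ − η(C(θ) + λI)⁻¹∇L(θ)` satisfies
`θ⁺/‖θ⁺‖ = θ̂ − η (I − θ̂θ̂ᵀ)(C(θ̂) + ρ²λ I)⁻¹ ∇L(θ̂) + O(η²)`. -/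
theorem damped_preconditioned_normalized_update {n : ℕ}
    (θ : EuclideanSpace ℝ (Fin n)) (hθ : θ ≠ 0)
    (Ch : Matrix (Fin n) (Fin n) ℝ) (hCh : Ch.PosSemidef)
    (lam : ℝ) (hlam : 0 < lam) (ghat : Fin n → ℝ) :
    (fun η : ℝ =>
        (fun θplus : EuclideanSpace ℝ (Fin n) => ‖θplus‖⁻¹ • θplus)
          (θ - η • (EuclideanSpace.equiv (Fin n) ℝ).symm
            (((‖θ‖ ^ 2)⁻¹ • Ch + lam • (1 : Matrix (Fin n) (Fin n) ℝ))⁻¹.mulVec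
              (‖θ‖⁻¹ • ghat))) -
        (‖θ‖⁻¹ • θ - η •
          ((fun v : EuclideanSpace ℝ (Fin n) => v - ⟪‖θ‖⁻¹ • θ, v⟫ • (‖θ‖⁻¹ • θ))
            ((EuclideanSpace.equiv (Fin n) ℝ).symm
              ((Ch + (‖θ‖ ^ 2 * lam) • (1 : Matrix (Fin n) (Fin n) ℝ))⁻¹.mulVec ghat)))))
      =O[nhds 0] fun η : ℝ => η ^ 2 :=
  damped_preconditioned_normalized_update_general θ hθ Ch lam ghat
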